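/- Let q > 1 be real, D = diag(q, −q⁻¹), and U = ((1/[2]_q, √[3]_q/[2]_q), (−√[3]_q/[2]_q, 1/[2]_q)). Then the matrix N = D·(U·D·Uᵀ)·D satisfies trace(N) = 0 and N² = 1; consequently trace(Nⁿ) = 1 + (−1)ⁿ for every natural number n, i.e. it equals 0 for odd n and 2 for even n. -/

import Mathlib

open Matrix

/-- The quantum integer `[n]_q = (qⁿ − q⁻ⁿ)/(q − q⁻¹)`. -/
noncomputable def qn (q : ℝ) (n : ℤ) : ℝ := (q ^ n - q ^ (-n)) / (q - q⁻¹)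

/-- The diagonal R-matrix `D = diag(q, −q⁻¹)`. -/
noncomputable def Dmat (q : ℝ) : Matrix (Fin 2) (Fin 2) ℝ := !![q, 0; 0, -q⁻¹]

/-- The mixing (Racah) matrix `U`. -/
noncomputable def Umat (q : ℝ) : Matrix (Fin 2) (Fin 2) ℝ :=
  !![1 / qn q 2, Real.sqrt (qn q 3) / qn q 2;
     -Real.sqrt (qn q 3) / qn q 2, 1 / qn q 2]

/-!
Write `a = [2]_q = q + q⁻¹` and `s = √[3]_q`, so that `s² = a² − 1` and `U = a⁻¹ (1, s; −s, 1)`.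
Multiplying out gives `N = a⁻¹ (−1, s; s, 1)`, a reflection because `(1 + s²) / a² = 1`:
it is traceless and squares to the identity, so `Nⁿ` is `1` or `N` according to the parity of `n`.
-/

lemma sub_inv_ne_zero_of_one_lt {q : ℝ} (hq : 1 < q) : q - q⁻¹ ≠ 0 :=
  sub_ne_zero.mpr ((inv_lt_one_of_one_lt₀ hq).trans hq).ne'

section QuantumInteger

variable {q : ℝ} (hq : q - q⁻¹ ≠ 0)
include hq

lemma ne_zero_of_sub_inv_ne_zero : q ≠ 0 := by
  rintro rfl
  simp at hq

lemma qn_two : qn q 2 = q + q⁻¹ := by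
  have := ne_zero_of_sub_inv_ne_zero hq
  rw [qn, div_eq_iff hq]
  field_simp
  ring

lemma qn_three : qn q 3 = qn q 2 ^ 2 - 1 := by
  have := ne_zero_of_sub_inv_ne_zero hq
  rw [qn_two hq, qn, div_eq_iff hq]
  field_simp
  ring

lemma qn_two_ne_zero : qn q 2 ≠ 0 := by
  have hq0 := ne_zero_of_sub_inv_ne_zero hq
  rw [qn_two hq]
  intro h
  have : q ^ 2 + 1 = 0 := by field_simp at h; linarith
  nlinarith [sq_nonneg q]

lemma sq_sqrt_qn_three : √(qn q 3) ^ 2 = qn q 2 ^ 2 - 1 := by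
  have hq0 := ne_zero_of_sub_inv_ne_zero hq
  have : 0 ≤ qn q 3 := by
    rw [qn_three hq, qn_two hq]
    nlinarith [sq_nonneg q, sq_nonneg q⁻¹, mul_inv_cancel₀ hq0]
  rw [Real.sq_sqrt this, qn_three hq]

lemma inv_qn_two_sq_add_sq_eq_one : (qn q 2)⁻¹ ^ 2 + (√(qn q 3) / qn q 2) ^ 2 = 1 := by
  have := qn_two_ne_zero hq
  rw [div_pow, sq_sqrt_qn_three hq]
  field_simp
  ring

lemma torusPeriod_eq_reflection :
    Dmat q * (Umat q * Dmat q * (Umat q)ᵀ) * Dmat q =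
      !![-(qn q 2)⁻¹, √(qn q 3) / qn q 2; √(qn q 3) / qn q 2, (qn q 2)⁻¹] := by
  have hq0 := ne_zero_of_sub_inv_ne_zero hq
  have ha := qn_two_ne_zero hq
  have hs := sq_sqrt_qn_three hq
  rw [qn_two hq] at ha hs
  rw [Umat, qn_two hq]
  generalize √(qn q 3) = s at hs ⊢
  have hs' : q ^ 2 * s ^ 2 = q ^ 4 + q ^ 2 + 1 := by
    rw [hs]
    field_simp
    ring
  rw [eta_fin_two (!![_, _; _, _]ᵀ), Dmat]
  simp only [mul_fin_two, transpose_apply, of_apply, cons_val', cons_val_zero, cons_val_one, empty_val',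
    cons_val_fin_one]
  congr <;> field_simp
  · linear_combination -hs'
  · ring
  · ring
  · linear_combination hs'

end QuantumInteger

lemma trace_reflection {R : Type*} [CommRing R] (c d : R) : (!![-c, d; d, c]).trace = 0 := by
  simp [trace_fin_two]

lemma reflection_sq {R : Type*} [CommRing R] {c d : R} (h : c ^ 2 + d ^ 2 = 1) :
    !![-c, d; d, c] ^ 2 = 1 := by
  rw [sq, mul_fin_two, one_fin_two]
  congr
  · linear_combination h
  · ring
  · ring
  · linear_combination h

lemma trace_pow_of_sq_eq_one {R : Type*} [CommRing R] {M : Matrix (Fin 2) (Fin 2) R}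
    (hsq : M ^ 2 = 1) (htr : M.trace = 0) (n : ℕ) : (M ^ n).trace = 1 + (-1) ^ n := by
  rcases Nat.even_or_odd' n with ⟨k, rfl | rfl⟩
  · rw [pow_mul, hsq, one_pow, trace_one, Fintype.card_fin, pow_mul, neg_one_sq, one_pow]
    norm_num
  · simp [pow_succ, pow_mul, hsq, htr]

/-- `N = D·(U·D·Uᵀ)·D` (the torus period in the `[22]` sector) has
`trace N = 0` and `N² = 1`; hence `trace(Nⁿ) = 1 + (−1)ⁿ` for every `n : ℕ`. -/
theorem torus_period_22_sector (q : ℝ) (hq : 1 < q) :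
    (Dmat q * (Umat q * Dmat q * (Umat q)ᵀ) * Dmat q).trace = 0 ∧
    (Dmat q * (Umat q * Dmat q * (Umat q)ᵀ) * Dmat q) ^ 2 = 1 ∧
    ∀ n : ℕ, ((Dmat q * (Umat q * Dmat q * (Umat q)ᵀ) * Dmat q) ^ n).trace =
      1 + (-1 : ℝ) ^ n := by
  have hq' := sub_inv_ne_zero_of_one_lt hq
  have htr := trace_reflection (qn q 2)⁻¹ (√(qn q 3) / qn q 2)
  have hsq := reflection_sq (inv_qn_two_sq_add_sq_eq_one hq')
  rw [torusPeriod_eq_reflection hq']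
  exact ⟨htr, hsq, trace_pow_of_sq_eq_one hsq htr⟩
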